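/- Let D = conv{0, e₁, e₂, e₁+e₂, e₃} ⊆ ℝ³ be the quadrangular pyramid over the unit square conv{0, e₁, e₂, e₁+e₂} with apex e₃. Then the Lebesgue volume of the difference body D + (−D) equals 14/3. -/

import Mathlib

/-!
The pyramid `D` is the polytope `0 ≤ x, y, z`, `x + z ≤ 1`, `y + z ≤ 1`: it is the union of the
tetrahedra `conv {0, e₁, e₁ + e₂, e₃}` and `conv {0, e₂, e₁ + e₂, e₃}`. Consequently `D - D` is the
cube `[-1, 1]³` cut by `|x + z| ≤ 1` and `|y + z| ≤ 1`: a point `p` of the cut cube is `p⁺ - p⁻`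
(coordinatewise positive and negative parts), and both `p⁺` and `p⁻` lie in `D`. The slice of the
cut cube at height `z` is a square of side `2 - |z|`, so its volume is
`∫₋₁¹ (2 - |z|)² dz = 14 / 3`.
-/

open Pointwise MeasureTheory

/-- The standard basis vector `eᵢ` of `ℝ³`. -/
noncomputable def stdVec (i : Fin 3) : EuclideanSpace ℝ (Fin 3) :=
  EuclideanSpace.single i (1 : ℝ)

/-- The quadrangular pyramid `conv {0, e₁, e₂, e₁+e₂, e₃} ⊆ ℝ³` over the unit square
`conv {0, e₁, e₂, e₁+e₂}` with apex `e₃`. -/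
noncomputable def stdPyramid : Set (EuclideanSpace ℝ (Fin 3)) :=
  convexHull ℝ {0, stdVec 0, stdVec 1, stdVec 0 + stdVec 1, stdVec 2}

theorem posPart_add_posPart_le {α : Type*} [AddCommGroup α] [LinearOrder α]
    [IsOrderedAddMonoid α] {a b c : α} (hc : 0 ≤ c) (ha : a ≤ c) (hb : b ≤ c)
    (hab : a + b ≤ c) : a⁺ + b⁺ ≤ c := by
  rcases le_total a 0 with ha0 | ha0 <;> rcases le_total b 0 with hb0 | hb0 <;>
    simp [*]

theorem mem_stdPyramid_iff {p : EuclideanSpace ℝ (Fin 3)} :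
    p ∈ stdPyramid ↔ 0 ≤ p 0 ∧ 0 ≤ p 1 ∧ 0 ≤ p 2 ∧ p 0 + p 2 ≤ 1 ∧ p 1 + p 2 ≤ 1 := by
  constructor
  · intro hp
    suffices stdPyramid ⊆
        {q | 0 ≤ q 0 ∧ 0 ≤ q 1 ∧ 0 ≤ q 2 ∧ q 0 + q 2 ≤ 1 ∧ q 1 + q 2 ≤ 1} from this hp
    refine convexHull_min ?_ ?_
    · simp [Set.insert_subset_iff, stdVec]
    · intro u hu v hv a b ha hb hab
      simp only [Set.mem_ofPred_eq, PiLp.add_apply, PiLp.smul_apply, smul_eq_mul] at hu hv ⊢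
      refine ⟨by nlinarith, by nlinarith, by nlinarith, by nlinarith, by nlinarith⟩
  · rintro ⟨h0, h1, h2, h02, h12⟩
    have combo (w : Fin 4 → ℝ) (v : Fin 4 → EuclideanSpace ℝ (Fin 3)) (hw : ∀ i, 0 ≤ w i)
        (hw1 : ∑ i, w i = 1)
        (hv : ∀ i, v i ∈ ({0, stdVec 0, stdVec 1, stdVec 0 + stdVec 1, stdVec 2} : Set _)) :
        ∑ i, w i • v i ∈ stdPyramid :=
      (convex_convexHull ℝ _).sum_mem (fun i _ => hw i) hw1 fun i _ => subset_convexHull ℝ _ (hv i)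
    rcases le_total (p 1) (p 0) with h | h
    · convert combo ![1 - p 0 - p 2, p 0 - p 1, p 1, p 2]
        ![0, stdVec 0, stdVec 0 + stdVec 1, stdVec 2] ?_ ?_ ?_
      · ext i; fin_cases i <;> simp [Fin.sum_univ_four, stdVec]
      · intro i; fin_cases i <;> simp <;> linarith
      · simp [Fin.sum_univ_four]; ring
      · intro i; fin_cases i <;> simp
    · convert combo ![1 - p 1 - p 2, p 1 - p 0, p 0, p 2]
        ![0, stdVec 1, stdVec 0 + stdVec 1, stdVec 2] ?_ ?_ ?_
      · ext i; fin_cases i <;> simp [Fin.sum_univ_four, stdVec]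
      · intro i; fin_cases i <;> simp <;> linarith
      · simp [Fin.sum_univ_four]; ring
      · intro i; fin_cases i <;> simp

def cutCube : Set (EuclideanSpace ℝ (Fin 3)) :=
  {p | |p 0| ≤ 1 ∧ |p 1| ≤ 1 ∧ |p 2| ≤ 1 ∧ |p 0 + p 2| ≤ 1 ∧ |p 1 + p 2| ≤ 1}

theorem stdPyramid_add_neg_stdPyramid : stdPyramid + -stdPyramid = cutCube := by
  apply Set.Subset.antisymm
  · rintro _ ⟨u, hu, v, hv, rfl⟩
    rw [Set.mem_neg, mem_stdPyramid_iff] at hv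
    rw [mem_stdPyramid_iff] at hu
    simp only [PiLp.neg_apply] at hv
    simp only [cutCube, Set.mem_ofPred_eq, PiLp.add_apply, abs_le]
    refine ⟨⟨?_, ?_⟩, ⟨?_, ?_⟩, ⟨?_, ?_⟩, ⟨?_, ?_⟩, ⟨?_, ?_⟩⟩ <;> linarith
  · rintro p ⟨h0, h1, h2, h02, h12⟩
    rw [abs_le] at h0 h1 h2 h02 h12
    refine ⟨WithLp.toLp 2 fun i => (p i)⁺, ?_, -WithLp.toLp 2 fun i => (p i)⁻, ?_, ?_⟩
    · rw [mem_stdPyramid_iff]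
      exact ⟨posPart_nonneg _, posPart_nonneg _, posPart_nonneg _,
        posPart_add_posPart_le zero_le_one h0.2 h2.2 h02.2,
        posPart_add_posPart_le zero_le_one h1.2 h2.2 h12.2⟩
    · rw [Set.mem_neg, neg_neg, mem_stdPyramid_iff]
      simp only [← posPart_neg]
      exact ⟨posPart_nonneg _, posPart_nonneg _, posPart_nonneg _,
        posPart_add_posPart_le zero_le_one (by linarith) (by linarith) (by linarith),
        posPart_add_posPart_le zero_le_one (by linarith) (by linarith) (by linarith)⟩
    · ext i
      simp [← sub_eq_add_neg]

theorem volume_setOf_abs_le_one_and_abs_add_le_one (z : ℝ) :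
    volume {x : ℝ | |x| ≤ 1 ∧ |x + z| ≤ 1} = ENNReal.ofReal (2 - |z|) := by
  have hIcc : {x : ℝ | |x| ≤ 1 ∧ |x + z| ≤ 1} = Set.Icc (max (-1) (-1 - z)) (min 1 (1 - z)) := by
    ext x
    simp only [Set.mem_ofPred_eq, Set.mem_Icc, abs_le, max_le_iff, le_min_iff]
    constructor <;> intro h <;> refine ⟨⟨?_, ?_⟩, ?_, ?_⟩ <;> linarith
  rw [hIcc, Real.volume_Icc]
  congr 1
  rcases le_total 0 z with h | h
  · rw [min_eq_right (by linarith), max_eq_left (by linarith), abs_of_nonneg h]; ring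
  · rw [min_eq_left (by linarith), max_eq_right (by linarith), abs_of_nonpos h]; ring

theorem integral_two_sub_abs_sq : ∫ x in (-1 : ℝ)..1, (2 - |x|) ^ 2 = 14 / 3 := by
  have hcont : Continuous fun x : ℝ => (2 - |x|) ^ 2 := by fun_prop
  have hhalf : ∫ x in (0 : ℝ)..1, (2 - |x|) ^ 2 = 7 / 3 := by
    have habs : Set.EqOn (fun x : ℝ => (2 - |x|) ^ 2) (fun x => (2 - x) ^ 2) (Set.uIcc 0 1) :=
      fun x hx => by rw [Set.uIcc_of_le zero_le_one] at hx; simp only [abs_of_nonneg hx.1]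
    rw [intervalIntegral.integral_congr habs]
    simp [intervalIntegral.integral_comp_sub_left (fun x => x ^ 2)]
    norm_num
  have heven : ∫ x in (-1 : ℝ)..0, (2 - |x|) ^ 2 = ∫ x in (0 : ℝ)..1, (2 - |x|) ^ 2 := by
    simpa using (intervalIntegral.integral_comp_neg (a := 0) (b := 1) fun x => (2 - |x|) ^ 2).symm
  rw [← intervalIntegral.integral_add_adjacent_intervals (b := 0) (hcont.intervalIntegrable _ _)
    (hcont.intervalIntegrable _ _), heven, hhalf]
  norm_num

/-- The image of `cutCube` under `p ↦ (p 2, (p 0, p 1))`. -/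
def cutCubeFibred : Set (ℝ × (Fin 2 → ℝ)) :=
  {q | q.1 ∈ Set.Icc (-1) 1 ∧ q.2 ∈ Set.univ.pi fun _ => {x | |x| ≤ 1 ∧ |x + q.1| ≤ 1}}

theorem volume_cutCubeFibred : volume cutCubeFibred = 14 / 3 := by
  have hslice (z : ℝ) : volume (Prod.mk z ⁻¹' cutCubeFibred) =
      (Set.Icc (-1) 1).indicator (fun z => ENNReal.ofReal ((2 - |z|) ^ 2)) z := by
    by_cases hz : z ∈ Set.Icc (-1) 1
    · have hsq : Prod.mk z ⁻¹' cutCubeFibred =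
          Set.univ.pi fun _ => {x | |x| ≤ 1 ∧ |x + z| ≤ 1} := by
        ext w
        simp only [cutCubeFibred, Set.mem_preimage, Set.mem_ofPred_eq, hz, true_and]
      rw [hsq, volume_pi_pi, Set.indicator_of_mem hz,
        ENNReal.ofReal_pow (by linarith [abs_le.2 hz])]
      simp [volume_setOf_abs_le_one_and_abs_add_le_one]
    · have hempty : Prod.mk z ⁻¹' cutCubeFibred = ∅ := by
        ext w
        simp only [cutCubeFibred, Set.mem_preimage, Set.mem_ofPred_eq, hz, false_and,
          Set.mem_empty_iff_false]
      rw [hempty, Set.indicator_of_notMem hz, measure_empty]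
  have hint : ∫ z in Set.Icc (-1 : ℝ) 1, (2 - |z|) ^ 2 = 14 / 3 := by
    rw [integral_Icc_eq_integral_Ioc, ← intervalIntegral.integral_of_le (by norm_num),
      integral_two_sub_abs_sq]
  have hmeas : MeasurableSet cutCubeFibred := by
    unfold cutCubeFibred
    measurability
  rw [Measure.volume_eq_prod, Measure.prod_apply hmeas]
  simp_rw [hslice]
  rw [lintegral_indicator measurableSet_Icc, ← ofReal_integral_eq_lintegral_ofReal, hint]
  · rw [ENNReal.ofReal_div_of_pos (by norm_num)]; norm_num
  · exact (by fun_prop : Continuous fun z : ℝ => (2 - |z|) ^ 2).integrableOn_Icc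
  · exact Filter.Eventually.of_forall fun z => sq_nonneg _

theorem volume_cutCube : volume cutCube = 14 / 3 := by
  have hpre : cutCube = ((MeasurableEquiv.toLp 2 (Fin 3 → ℝ)).symm.trans
      (MeasurableEquiv.piFinSuccAbove (fun _ => ℝ) 2)) ⁻¹' cutCubeFibred := by
    ext p
    simp [cutCube, cutCubeFibred, Fin.forall_fin_two, Fin.removeNth, ← abs_le]
    tauto
  rw [hpre, ((EuclideanSpace.volume_preserving_symm_measurableEquiv_toLp (Fin 3)).trans
    (volume_preserving_piFinSuccAbove (fun _ => ℝ) 2)).measure_preimage_equiv,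
    volume_cutCubeFibred]

/-- The volume of the difference body of the quadrangular pyramid equals `14/3`. -/
theorem stmt_13 : volume (stdPyramid + -stdPyramid) = 14 / 3 := by
  rw [stdPyramid_add_neg_stdPyramid, volume_cutCube]
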